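/- arXiv:1312.5254 — 9 statements merged into one kernel-verified Lean document; each statement's English description precedes it below -/
import Mathlib

section
/- Let k, n ∈ ℕ with n ≥ 1, let ζ ∈ ℂ be a primitive n-th root of unity, and let ñ = n if n is odd and ñ = n/2 if n is even. Then a matrix X : Matrix I_k I_k ℂ commutes with D(k,ζ) if and only if X r s = 0 for all r, s : I_k with |r| ≢ |s| (mod ñ). Consequently, the matrix units E_{r,s} (the matrix with 1 in position (r,s) and 0 elsewhere) taken over all pairs r, s with |r| ≡ |s| (mod ñ) form a ℂ-basis of the centralizer algebra Z_k(C_n) = {X : X·D(k,ζ) = D(k,ζ)·X}. -/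
open Matrix

/-- The number of `-1` factors (encoded as `true`) in a simple tensor index. -/
def wt {k : ℕ} (r : Fin k → Bool) : ℕ := (Finset.univ.filter fun i => r i = true).card

/-- The matrix of `g^{⊗k}` on `V^{⊗k}` for `g = diag(ζ⁻¹, ζ)`. -/
noncomputable def Dmat (k : ℕ) (ζ : ℂ) : Matrix (Fin k → Bool) (Fin k → Bool) ℂ :=
  Matrix.diagonal fun r => ζ ^ ((k : ℤ) - 2 * (wt r : ℤ))

/-- `ñ = n` if `n` is odd, `n/2` if `n` is even. -/
def ntil (n : ℕ) : ℕ := if n % 2 = 0 then n / 2 else n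

/-- The centralizer of a matrix `M`, as a submodule of the matrix algebra. -/
noncomputable def commSub {I : Type*} [Fintype I] [DecidableEq I] (M : Matrix I I ℂ) :
    Submodule ℂ (Matrix I I ℂ) where
  carrier := {X | X * M = M * X}
  add_mem' := by
    intro a b ha hb
    simp only [Set.mem_setOf_eq] at *
    rw [add_mul, mul_add, ha, hb]
  zero_mem' := by simp
  smul_mem' := by
    intro c X hX
    simp only [Set.mem_setOf_eq] at *
    rw [smul_mul_assoc, mul_smul_comm, hX]

/-! The diagonal entries `ζ^(k - 2|r|)` and `ζ^(k - 2|s|)` of `D(k,ζ)` agree iff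
`n ∣ 2(|r| - |s|)`, i.e. iff `ñ ∣ |r| - |s|`, and a matrix commutes with a diagonal matrix iff it
vanishes at every position where the two diagonal entries differ. The centralizer is therefore the
space of matrices supported on the pairs with `|r| ≡ |s| (mod ñ)`, and the matrix units at those
pairs are a basis of it. -/

theorem natCast_dvd_two_mul_iff_ntil_dvd (n : ℕ) (d : ℤ) :
    (n : ℤ) ∣ 2 * d ↔ (ntil n : ℤ) ∣ d := by
  unfold ntil
  split_ifs with h
  · obtain ⟨m, rfl⟩ : 2 ∣ n := Nat.dvd_of_mod_eq_zero h
    rw [Nat.mul_div_cancel_left m two_pos, Nat.cast_mul, Nat.cast_two]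
    exact mul_dvd_mul_iff_left two_ne_zero
  · have hodd : IsCoprime (n : ℤ) 2 :=
      Nat.isCoprime_iff_coprime.mpr (Nat.coprime_two_right.mpr (Nat.odd_iff.mpr (by omega)))
    exact ⟨hodd.dvd_of_dvd_mul_left, (Dvd.dvd.mul_left · 2)⟩

theorem IsPrimitiveRoot.zpow_eq_zpow_iff_dvd {K : Type*} [CommGroupWithZero K] {ζ : K} {n : ℕ}
    (hζ : IsPrimitiveRoot ζ n) (hn : n ≠ 0) (a b : ℤ) :
    ζ ^ a = ζ ^ b ↔ (n : ℤ) ∣ a - b := by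
  have hζ0 : ζ ≠ 0 := hζ.ne_zero hn
  rw [← hζ.zpow_eq_one_iff_dvd, zpow_sub₀ hζ0, div_eq_one_iff_eq (zpow_ne_zero _ hζ0)]

theorem IsPrimitiveRoot.zpow_sub_two_mul_eq_iff {K : Type*} [CommGroupWithZero K] {ζ : K}
    {n : ℕ} (hζ : IsPrimitiveRoot ζ n) (hn : n ≠ 0) (k : ℤ) (a b : ℕ) :
    ζ ^ (k - 2 * (a : ℤ)) = ζ ^ (k - 2 * (b : ℤ)) ↔ a ≡ b [MOD ntil n] := by
  rw [hζ.zpow_eq_zpow_iff_dvd hn, Nat.modEq_iff_dvd, ← natCast_dvd_two_mul_iff_ntil_dvd]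
  ring_nf

theorem Matrix.mul_diagonal_eq_diagonal_mul_iff {m R : Type*} [Fintype m] [DecidableEq m]
    [CommRing R] [NoZeroDivisors R] (X : Matrix m m R) (d : m → R) :
    X * diagonal d = diagonal d * X ↔ ∀ i j, d i ≠ d j → X i j = 0 := by
  simp only [← Matrix.ext_iff, mul_diagonal, diagonal_mul]
  refine forall₂_congr fun i j => ?_
  rw [mul_comm, ← sub_eq_zero, ← sub_mul, mul_eq_zero, sub_eq_zero, or_iff_not_imp_left, ne_comm]

theorem Matrix.exists_basis_single_of_mem_iff {m n R : Type*} [Finite m] [Finite n]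
    [DecidableEq m] [DecidableEq n] [CommRing R] (P : m → n → Prop)
    (S : Submodule R (Matrix m n R)) (hS : ∀ X, X ∈ S ↔ ∀ i j, ¬ P i j → X i j = 0) :
    ∃ b : Module.Basis {p : m × n // P p.1 p.2} R S,
      ∀ p, (b p : Matrix m n R) = single p.1.1 p.1.2 1 := by
  classical
  let e : S ≃ₗ[R] ({p : m × n // P p.1 p.2} → R) :=
    { toFun := fun X p => (X : Matrix m n R) p.1.1 p.1.2
      map_add' := fun _ _ => rfl
      map_smul' := fun _ _ => rfl
      invFun := fun c => ⟨of fun i j => if h : P i j then c ⟨(i, j), h⟩ else 0,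
        (hS _).mpr fun i j h => by simp [h]⟩
      left_inv := fun X => by
        ext i j
        by_cases h : P i j
        · simp [h]
        · simp [h, (hS X).mp X.2 i j h]
      right_inv := fun c => by
        funext p
        simp [p.2] }
  refine ⟨Module.Basis.ofEquivFun e, fun p => ?_⟩
  have hp : single p.1.1 p.1.2 (1 : R) ∈ S :=
    (hS _).mpr fun i j h => by
      rw [single_apply, if_neg]
      rintro ⟨rfl, rfl⟩
      exact h p.2
  have he : e.symm (Pi.single p 1) = ⟨_, hp⟩ := e.symm_apply_eq.mpr <| funext fun q => by
    change (Pi.single p 1 : _ → R) q = single p.1.1 p.1.2 (1 : R) q.1.1 q.1.2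
    simp only [single_apply, Pi.single_apply, Subtype.ext_iff, Prod.ext_iff, eq_comm]
  simp only [Module.Basis.coe_ofEquivFun, he]

theorem mul_Dmat_eq_Dmat_mul_iff {k n : ℕ} (hn : 1 ≤ n) {ζ : ℂ} (hζ : IsPrimitiveRoot ζ n)
    (X : Matrix (Fin k → Bool) (Fin k → Bool) ℂ) :
    X * Dmat k ζ = Dmat k ζ * X ↔
      ∀ r s : Fin k → Bool, ¬ (wt r ≡ wt s [MOD ntil n]) → X r s = 0 := by
  rw [Dmat, mul_diagonal_eq_diagonal_mul_iff]
  simp only [ne_eq, hζ.zpow_sub_two_mul_eq_iff (by omega)]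

theorem stmt0 (k n : ℕ) (hn : 1 ≤ n) (ζ : ℂ) (hζ : IsPrimitiveRoot ζ n) :
    (∀ X : Matrix (Fin k → Bool) (Fin k → Bool) ℂ,
      X * Dmat k ζ = Dmat k ζ * X ↔
        ∀ r s : Fin k → Bool, ¬ (wt r ≡ wt s [MOD ntil n]) → X r s = 0) ∧
    ∃ b : Module.Basis {p : (Fin k → Bool) × (Fin k → Bool) // wt p.1 ≡ wt p.2 [MOD ntil n]}
        ℂ (commSub (Dmat k ζ)),
      ∀ p, (b p : Matrix (Fin k → Bool) (Fin k → Bool) ℂ)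
            = Matrix.single p.1.1 p.1.2 1 :=
  ⟨mul_Dmat_eq_Dmat_mul_iff hn hζ,
    exists_basis_single_of_mem_iff (fun r s => wt r ≡ wt s [MOD ntil n]) _
      (mul_Dmat_eq_Dmat_mul_iff hn hζ)⟩
end

section
/- For all k ∈ ℕ and all m ≥ 1: Σ_{0 ≤ a ≤ k} Σ_{0 ≤ b ≤ k, a ≡ b (mod m)} C(k,a)·C(k,b) = Σ_{0 ≤ c ≤ 2k, c ≡ k (mod m)} C(2k, c), where C(·,·) denotes binomial coefficients and congruences are Nat.ModEq. -/
/-!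
Reflecting `b ↦ k - b` turns the condition `a ≡ b` into `a + b ≡ k` without changing
`C(k, b)`, and Vandermonde's identity `C(2k, c) = Σ_{a + b = c} C(k, a) C(k, b)`, summed
against any weight on `c`, then collapses the double sum to the sum over `c ≡ k`.
-/

open Finset

lemma sum_choose_mul_choose_filter_add_eq (m n c : ℕ) :
    ∑ p ∈ range (m + 1) ×ˢ range (n + 1) with p.1 + p.2 = c, m.choose p.1 * n.choose p.2 =
      (m + n).choose c := by
  rw [Nat.add_choose_eq]
  apply sum_subset
  · intro p hp
    simpa using (mem_filter.1 hp).2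
  · intro p hp hp'
    simp only [mem_filter, mem_product, mem_range, mem_antidiagonal.1 hp, and_true,
      not_and_or, not_lt] at hp'
    rcases hp' with hm | hn
    · rw [Nat.choose_eq_zero_of_lt hm, zero_mul]
    · rw [Nat.choose_eq_zero_of_lt hn, mul_zero]

/-- Vandermonde's identity, weighted by an arbitrary function of `i + j`. -/
lemma sum_range_mul_add_choose {R : Type*} [CommSemiring R] (g : ℕ → R) (m n : ℕ) :
    ∑ c ∈ range (m + n + 1), g c * ((m + n).choose c : R) =
      ∑ i ∈ range (m + 1), ∑ j ∈ range (n + 1), g (i + j) * (m.choose i * n.choose j : R) := by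
  have maps_to : ∀ p ∈ range (m + 1) ×ˢ range (n + 1), p.1 + p.2 ∈ range (m + n + 1) := by
    simp only [mem_product, mem_range]
    omega
  rw [← sum_product', ← sum_fiberwise_of_maps_to maps_to]
  refine sum_congr rfl fun c _ => ?_
  rw [← sum_choose_mul_choose_filter_add_eq, Nat.cast_sum, mul_sum]
  refine sum_congr rfl fun p hp => ?_
  rw [(mem_filter.1 hp).2, Nat.cast_mul]

lemma modEq_sub_iff_add_modEq {n a b k : ℕ} (hb : b ≤ k) :
    a ≡ k - b [MOD n] ↔ a + b ≡ k [MOD n] := by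
  conv_rhs => rw [← Nat.sub_add_cancel hb]
  exact Nat.ModEq.rfl.add_iff_right.symm

theorem stmt2_general (k m : ℕ) :
    (∑ a ∈ Finset.range (k + 1), ∑ b ∈ Finset.range (k + 1),
        if a ≡ b [MOD m] then k.choose a * k.choose b else 0) =
      ∑ c ∈ Finset.range (2 * k + 1),
        if c ≡ k [MOD m] then (2 * k).choose c else 0 := by
  have vandermonde := sum_range_mul_add_choose (fun c => if c ≡ k [MOD m] then 1 else 0) k k
  simp only [Nat.cast_id, boole_mul, ← two_mul] at vandermonde
  rw [vandermonde]
  refine sum_congr rfl fun a _ => ?_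
  rw [← sum_range_reflect]
  refine sum_congr rfl fun b hb => ?_
  have hb : b ≤ k := Nat.lt_succ_iff.mp (mem_range.1 hb)
  simp only [add_tsub_cancel_right, Nat.choose_symm hb, modEq_sub_iff_add_modEq hb]

/-- The dimension of the centralizer algebra `Z_k(C_n)`,
`Σ_{a ≡ b mod m} C(k,a)·C(k,b)`, equals the coefficient of `z^k` in
`(1+z)^{2k}` reduced modulo `z^m = 1`, i.e. `Σ_{c ≡ k mod m} C(2k,c)`. -/
theorem stmt2 (k m : ℕ) (hm : 1 ≤ m) :
    (∑ a ∈ Finset.range (k + 1), ∑ b ∈ Finset.range (k + 1),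
        if a ≡ b [MOD m] then k.choose a * k.choose b else 0) =
      ∑ c ∈ Finset.range (2 * k + 1),
        if c ≡ k [MOD m] then (2 * k).choose c else 0 :=
  stmt2_general k m
end

section
/- Let k ∈ ℕ, let m ≥ 1 be odd, and let ζ ∈ ℂ be a primitive (2m)-th root of unity (so that ζ² is a primitive m-th root of unity). Then the centralizer subalgebras of D(k,ζ) and of D(k,ζ²) in Matrix I_k I_k ℂ are equal: {X | X·D(k,ζ) = D(k,ζ)·X} = {X | X·D(k,ζ²) = D(k,ζ²)·X}. (That is, Z_k(C_{2m}) = Z_k(C_m) when m is odd.) -/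
open Matrix

lemma comm_diag_iff {I : Type*} [Fintype I] [DecidableEq I] (d : I → ℂ)
    (X : Matrix I I ℂ) :
    X * Matrix.diagonal d = Matrix.diagonal d * X ↔
      ∀ r s, X r s = 0 ∨ d r = d s := by
  constructor
  · intro h r s
    have := congrFun (congrFun h r) s
    rw [Matrix.mul_diagonal, Matrix.diagonal_mul] at this
    rcases eq_or_ne (X r s) 0 with h0 | h0
    · exact Or.inl h0
    · right
      rw [mul_comm (d r)] at this
      exact (mul_left_cancel₀ h0 this).symm
  · intro h
    ext r s
    rw [Matrix.mul_diagonal, Matrix.diagonal_mul]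
    rcases h r s with h0 | h0
    · simp [h0]
    · rw [h0, mul_comm]

lemma zpow_eq_iff (ζ : ℂ) (hζ : ζ ≠ 0) (n : ℕ) (hn : IsPrimitiveRoot ζ n)
    (a b : ℤ) : ζ ^ a = ζ ^ b ↔ (n : ℤ) ∣ a - b := by
  rw [← hn.zpow_eq_one_iff_dvd, zpow_sub₀ hζ, div_eq_one_iff_eq (zpow_ne_zero _ hζ)]

/-- If `m` is odd and `ζ` is a primitive `2m`-th root of unity, then the centralizer
algebras `Z_k(C_{2m})` and `Z_k(C_m)` coincide. -/
theorem stmt3 (k m : ℕ) (hm : 1 ≤ m) (hodd : Odd m) (ζ : ℂ)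
    (hζ : IsPrimitiveRoot ζ (2 * m)) :
    {X : Matrix (Fin k → Bool) (Fin k → Bool) ℂ | X * Dmat k ζ = Dmat k ζ * X} =
      {X : Matrix (Fin k → Bool) (Fin k → Bool) ℂ |
        X * Dmat k (ζ ^ 2) = Dmat k (ζ ^ 2) * X} := by
  have hmpos : 0 < 2 * m := by omega
  have hζ0 : ζ ≠ 0 := hζ.ne_zero (by omega)
  have hζ20 : ζ ^ 2 ≠ 0 := pow_ne_zero _ hζ0
  have hζ2 : IsPrimitiveRoot (ζ ^ 2) m := hζ.pow hmpos (by ring)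
  have key : ∀ r s : Fin k → Bool,
      (ζ ^ ((k:ℤ) - 2 * wt r) = ζ ^ ((k:ℤ) - 2 * wt s)) ↔
      ((ζ^2) ^ ((k:ℤ) - 2 * wt r) = (ζ^2) ^ ((k:ℤ) - 2 * wt s)) := by
    intro r s
    rw [zpow_eq_iff ζ hζ0 (2*m) hζ, zpow_eq_iff (ζ^2) hζ20 m hζ2]
    have heq : ((k:ℤ) - 2 * wt r) - ((k:ℤ) - 2 * wt s) = 2 * ((wt s : ℤ) - wt r) := by ring
    rw [heq]
    push_cast
    constructor
    · intro ⟨c, hc⟩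
      exact ⟨2 * c, by rw [hc]; ring⟩
    · intro hd
      have hcop : IsCoprime (m : ℤ) 2 := by
        rw [Int.isCoprime_iff_gcd_eq_one]
        rcases hodd with ⟨j, hj⟩
        subst hj
        simp [Int.gcd]
      have : (m:ℤ) ∣ (wt s : ℤ) - wt r := hcop.dvd_of_dvd_mul_left hd
      exact mul_dvd_mul_left 2 this
  ext X
  simp only [Set.mem_setOf_eq, Dmat, comm_diag_iff]
  constructor <;> intro h r s <;> rcases h r s with h0 | h0
  · exact Or.inl h0
  · exact Or.inr ((key r s).mp h0)
  · exact Or.inl h0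
  · exact Or.inr ((key r s).mpr h0)
end

section
/- Let k, n ∈ ℕ with n ≥ 1, let ζ ∈ ℂ be a primitive n-th root of unity, and let ℓ ∈ ℤ. Then the eigenspace {v : I_k → ℂ | D(k,ζ).mulVec v = ζ^ℓ • v} has ℂ-dimension Σ_{0 ≤ b ≤ k, (k : ℤ) − 2b ≡ ℓ (mod n)} C(k,b), where ζ^ℓ is an integer power and the congruence is in ℤ. -/
open Matrix

/-- The eigenspace `{v | M.mulVec v = μ • v}` as a submodule of `I → ℂ`. -/
noncomputable def eigSub {I : Type*} [Fintype I] (M : Matrix I I ℂ) (μ : ℂ) :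
    Submodule ℂ (I → ℂ) where
  carrier := {v | M.mulVec v = μ • v}
  add_mem' := by
    intro a b ha hb
    simp only [Set.mem_setOf_eq] at *
    rw [Matrix.mulVec_add, ha, hb, smul_add]
  zero_mem' := by
    simp only [Set.mem_setOf_eq, Matrix.mulVec_zero, smul_zero]
  smul_mem' := by
    intro c v hv
    simp only [Set.mem_setOf_eq] at *
    rw [Matrix.mulVec_smul, hv, smul_comm]

/-!
Since `Dmat k ζ` is diagonal, its `ζ ^ ℓ`-eigenspace is spanned by the basis vectors `r` with
`ζ ^ (k - 2|r|) = ζ ^ ℓ`, i.e. with `k - 2|r| ≡ ℓ [ZMOD n]` because `ζ` has order exactly `n`.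
Counting these `r` by their weight `|r| = b` contributes `k.choose b` for each admissible `b`.
-/

open Finset

lemma IsPrimitiveRoot.zpow_eq_zpow_iff_modEq {G₀ : Type*} [CommGroupWithZero G₀] {ζ : G₀}
    {n : ℕ} (hζ : IsPrimitiveRoot ζ n) (hn : n ≠ 0) (a b : ℤ) :
    ζ ^ a = ζ ^ b ↔ a ≡ b [ZMOD n] := by
  have hζ0 : ζ ≠ 0 := hζ.ne_zero hn
  rw [← div_eq_one_iff_eq (zpow_ne_zero b hζ0), ← zpow_sub₀ hζ0, hζ.zpow_eq_one_iff_dvd,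
    Int.modEq_comm, Int.modEq_iff_dvd]

lemma Finset.card_filter_comp_eq_sum_ite {α β : Type*} [DecidableEq β] (f : α → β)
    {s : Finset α} {t : Finset β} (hf : ∀ a ∈ s, f a ∈ t) (P : β → Prop) [DecidablePred P] :
    #{a ∈ s | P (f a)} = ∑ b ∈ t, if P b then #{a ∈ s | f a = b} else 0 := by
  rw [card_eq_sum_card_fiberwise fun a ha => hf a (mem_filter.1 ha).1]
  refine sum_congr rfl fun b _ => ?_
  rw [filter_filter]
  split_ifs with hb
  · exact congrArg card (filter_congr fun a _ => and_iff_right_of_imp fun h => h ▸ hb)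
  · exact card_eq_zero.2 (filter_eq_empty_iff.2 fun a _ h => hb (h.2 ▸ h.1))

lemma wt_le {k : ℕ} (r : Fin k → Bool) : wt r ≤ k :=
  (card_le_univ _).trans_eq (Fintype.card_fin k)

lemma card_filter_wt_eq (k b : ℕ) : #{r : Fin k → Bool | wt r = b} = k.choose b := by
  calc #{r : Fin k → Bool | wt r = b} = #(powersetCard b (univ : Finset (Fin k))) := by
        refine card_nbij' (fun r => ({i | r i = true} : Finset (Fin k)))
          (fun s i => decide (i ∈ s)) (fun r hr => ?_) (fun s hs => ?_)
          (fun r _ => funext fun i => by simp) (fun s _ => by ext i; simp)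
        · simpa [wt] using mem_filter.1 (mem_coe.1 hr)
        · rw [mem_coe, mem_filter]
          simpa [wt] using hs
    _ = k.choose b := by simp

lemma mem_eigSub_diagonal_iff {I : Type*} [Fintype I] [DecidableEq I] {d : I → ℂ} {μ : ℂ}
    {v : I → ℂ} : v ∈ eigSub (diagonal d) μ ↔ ∀ r, d r ≠ μ → v r = 0 := by
  change diagonal d *ᵥ v = μ • v ↔ _
  simp only [funext_iff, mulVec_diagonal, Pi.smul_apply, smul_eq_mul, mul_eq_mul_right_iff,
    or_iff_not_imp_left]

lemma eigSub_diagonal_eq_iInf_ker_proj {I : Type*} [Fintype I] [DecidableEq I] (d : I → ℂ)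
    (μ : ℂ) : eigSub (diagonal d) μ = ⨅ r ∈ {r | d r ≠ μ}, LinearMap.ker (LinearMap.proj r) := by
  ext v
  simp [mem_eigSub_diagonal_iff]

lemma finrank_eigSub_diagonal {I : Type*} [Fintype I] [DecidableEq I] (d : I → ℂ) (μ : ℂ) :
    Module.finrank ℂ (eigSub (diagonal d) μ) = #{r | d r = μ} := by
  rw [eigSub_diagonal_eq_iInf_ker_proj, ← Fintype.card_subtype,
    (LinearMap.iInfKerProjEquiv ℂ (fun _ => ℂ) (I := {r | d r = μ}) (J := {r | d r ≠ μ})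
      (Set.disjoint_left.2 fun _ h h' => h' h) fun r _ => em (d r = μ)).finrank_eq,
    Module.finrank_fintype_fun_eq_card]
  rfl

theorem stmt4 (k n : ℕ) (hn : 1 ≤ n) (ζ : ℂ) (hζ : IsPrimitiveRoot ζ n) (ℓ : ℤ) :
    Module.finrank ℂ (eigSub (Dmat k ζ) (ζ ^ ℓ)) =
      ∑ b ∈ Finset.range (k + 1),
        if ((k : ℤ) - 2 * (b : ℤ)) ≡ ℓ [ZMOD (n : ℤ)] then k.choose b else 0 := by
  rw [Dmat, finrank_eigSub_diagonal,
    card_filter_comp_eq_sum_ite wt (fun r _ => mem_range_succ_iff.2 (wt_le r))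
      fun b : ℕ => ζ ^ ((k : ℤ) - 2 * (b : ℤ)) = ζ ^ ℓ]
  refine sum_congr rfl fun b _ => ?_
  simp only [hζ.zpow_eq_zpow_iff_modEq (Nat.one_le_iff_ne_zero.1 hn), card_filter_wt_eq]
end

section
/- Let A : Matrix (Fin 7) (Fin 7) ℕ be the adjacency matrix of the affine Dynkin diagram Ê₆ described in the context. Then for every m ≥ 1: 12·(A^(2m)) 0 0 = 4^m + 8, 12·(A^(2m)) 0 2 = 3·4^m, 12·(A^(2m)) 0 4 + 4 = 4^m, and 12·(A^(2m)) 0 6 + 4 = 4^m; and for every m ≥ 0: 12·(A^(2m+1)) 0 1 = 4^(m+1) + 8, 12·(A^(2m+1)) 0 3 + 4 = 4^(m+1), and 12·(A^(2m+1)) 0 5 + 4 = 4^(m+1). In particular, the number of closed walks of length 2k at node 0 equals (4^k + 8)/12 for all k ≥ 1. -/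
/-- Edge list of the affine Dynkin diagram `Ê₆`, with vertices `0,…,6` standing for
the nodes `0, 1, 2, 3⁺, 4⁺, 3⁻, 4⁻`. -/
def E6edges : List (Fin 7 × Fin 7) := [(0,1), (1,2), (2,3), (3,4), (2,5), (5,6)]

/-- Adjacency matrix of the affine Dynkin diagram `Ê₆` over `ℕ`. -/
def adjE6 : Matrix (Fin 7) (Fin 7) ℕ :=
  Matrix.of fun u v => if (u, v) ∈ E6edges ∨ (v, u) ∈ E6edges then 1 else 0

def X : ℕ → ℕ × ℕ × ℕ
  | 0 => (1, 0, 0)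
  | m + 1 => let (a, b, c) := X m; (a + b, a + 3 * b + 2 * c, b + c)

section vget
variable (a b c d e f g : ℕ)
@[simp] lemma vget0 : ![a,b,c,d,e,f,g] 0 = a := rfl
@[simp] lemma vget1 : ![a,b,c,d,e,f,g] 1 = b := rfl
@[simp] lemma vget2 : ![a,b,c,d,e,f,g] 2 = c := rfl
@[simp] lemma vget3 : ![a,b,c,d,e,f,g] 3 = d := rfl
@[simp] lemma vget4 : ![a,b,c,d,e,f,g] 4 = e := rfl
@[simp] lemma vget5 : ![a,b,c,d,e,f,g] 5 = f := rfl
@[simp] lemma vget6 : ![a,b,c,d,e,f,g] 6 = g := rfl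
end vget

lemma rowEven (m : ℕ) :
    (adjE6 ^ (2 * m)) 0 = ![(X m).1, 0, (X m).2.1, 0, (X m).2.2, 0, (X m).2.2] ∧
    (adjE6 ^ (2 * m + 1)) 0
      = ![0, (X m).1 + (X m).2.1, 0, (X m).2.1 + (X m).2.2, 0,
          (X m).2.1 + (X m).2.2, 0] := by
  induction m with
  | zero =>
    constructor
    · ext j; fin_cases j <;> simp [X, Matrix.one_apply] <;> rfl
    · ext j
      have h1 : 2 * 0 + 1 = 1 := rfl
      rw [h1, pow_one]
      fin_cases j <;> simp [X, adjE6, E6edges] <;> decide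
  | succ m ih =>
    obtain ⟨he, ho⟩ := ih
    have step : ∀ k : ℕ, (adjE6 ^ (k + 1)) 0 = fun j =>
        ∑ i, (adjE6 ^ k) 0 i * adjE6 i j := by
      intro k; ext j; rw [pow_succ, Matrix.mul_apply]
    have he' : (adjE6 ^ (2 * (m + 1))) 0
        = fun j => ∑ i, (adjE6 ^ (2 * m + 1)) 0 i * adjE6 i j := by
      have h2 : 2 * (m + 1) = (2 * m + 1) + 1 := by ring
      rw [h2, step]
    have he2 : (adjE6 ^ (2 * (m + 1))) 0
        = ![(X (m + 1)).1, 0, (X (m + 1)).2.1, 0, (X (m + 1)).2.2, 0,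
            (X (m + 1)).2.2] := by
      ext j
      rw [he', ho]
      fin_cases j <;>
        simp [Fin.sum_univ_seven, X, adjE6, E6edges] <;> ring
    refine ⟨he2, ?_⟩
    ext j
    rw [step (2 * (m + 1)), he2]
    fin_cases j <;>
      simp [Fin.sum_univ_seven, X, adjE6, E6edges] <;> ring

lemma Xval (m : ℕ) :
    12 * ((X m).1 + (X m).2.1) = 4 ^ (m + 1) + 8 ∧
    12 * ((X m).2.1 + (X m).2.2) + 4 = 4 ^ (m + 1) := by
  induction m with
  | zero => simp [X]
  | succ m ih =>
    obtain ⟨h1, h2⟩ := ih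
    have hp : (4 : ℕ) ^ (m + 1 + 1) = 4 * 4 ^ (m + 1) := by ring
    have hX : X (m + 1) = ((X m).1 + (X m).2.1,
        (X m).1 + 3 * (X m).2.1 + 2 * (X m).2.2, (X m).2.1 + (X m).2.2) := by
      simp [X]
    rw [hX]
    dsimp only
    omega

/-- Walk counts on `Ê₆` from the affine node `0`: `12·(A^{2m})₀₀ = 4^m + 8`, etc.
By Schur–Weyl duality these are the dimensions of the irreducible modules of the
centralizer algebra `Z_k(T)` for the binary tetrahedral group `T`, and
`dim Z_k(T) = (4^k + 8)/12`. -/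
theorem stmt13 :
    (∀ m : ℕ, 1 ≤ m →
      12 * (adjE6 ^ (2 * m)) 0 0 = 4 ^ m + 8 ∧
      12 * (adjE6 ^ (2 * m)) 0 2 = 3 * 4 ^ m ∧
      12 * (adjE6 ^ (2 * m)) 0 4 + 4 = 4 ^ m ∧
      12 * (adjE6 ^ (2 * m)) 0 6 + 4 = 4 ^ m) ∧
    (∀ m : ℕ,
      12 * (adjE6 ^ (2 * m + 1)) 0 1 = 4 ^ (m + 1) + 8 ∧
      12 * (adjE6 ^ (2 * m + 1)) 0 3 + 4 = 4 ^ (m + 1) ∧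
      12 * (adjE6 ^ (2 * m + 1)) 0 5 + 4 = 4 ^ (m + 1)) ∧
    (∀ k : ℕ, 1 ≤ k → (adjE6 ^ (2 * k)) 0 0 = (4 ^ k + 8) / 12) := by
  have even : ∀ m : ℕ, 1 ≤ m →
      12 * (adjE6 ^ (2 * m)) 0 0 = 4 ^ m + 8 ∧
      12 * (adjE6 ^ (2 * m)) 0 2 = 3 * 4 ^ m ∧
      12 * (adjE6 ^ (2 * m)) 0 4 + 4 = 4 ^ m ∧
      12 * (adjE6 ^ (2 * m)) 0 6 + 4 = 4 ^ m := by
    intro m hm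
    obtain ⟨n, rfl⟩ : ∃ n, m = n + 1 := ⟨m - 1, by omega⟩
    obtain ⟨h1, h2⟩ := Xval n
    have he := (rowEven (n + 1)).1
    have hX : X (n + 1) = ((X n).1 + (X n).2.1,
        (X n).1 + 3 * (X n).2.1 + 2 * (X n).2.2, (X n).2.1 + (X n).2.2) := by
      simp [X]
    rw [he, hX]
    simp only [vget0, vget2, vget4, vget6]
    omega
  refine ⟨even, ?_, ?_⟩
  · intro m
    obtain ⟨h1, h2⟩ := Xval m
    have ho := (rowEven m).2
    rw [ho]
    simp only [vget1, vget3, vget5]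
    omega
  · intro k hk
    have h := (even k hk).1
    omega
end

section
/- Let A : Matrix (Fin 8) (Fin 8) ℕ be the adjacency matrix of the affine Dynkin diagram Ê₇ described in the context. Then for every m ≥ 1: 24·(A^(2m)) 0 0 = 4^m + 6·2^m + 8, 24·(A^(2m)) 0 2 = 3·4^m + 6·2^m, 24·(A^(2m)) 0 7 + 8 = 2·4^m, 24·(A^(2m)) 0 4 + 6·2^m = 3·4^m, and 24·(A^(2m)) 0 6 + 6·2^m = 4^m + 8; and for every m ≥ 0: 24·(A^(2m+1)) 0 1 = 4^(m+1) + 6·2^(m+1) + 8, 24·(A^(2m+1)) 0 3 + 8 = 2·4^(m+1), and 24·(A^(2m+1)) 0 5 + 6·2^(m+1) = 4^(m+1) + 8. In particular, the number of closed walks of length 2k at node 0 equals (4^k + 6·2^k + 8)/24 for all k ≥ 1. -/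
/-- Edge list of the affine Dynkin diagram `Ê₇`, with vertices `0,…,7` standing for
the nodes `0, 1, 2, 3, 4⁺, 5, 6⁺, 4⁻`. -/
def E7edges : List (Fin 8 × Fin 8) :=
  [(0,1), (1,2), (2,3), (3,4), (4,5), (5,6), (3,7)]

/-- Adjacency matrix of the affine Dynkin diagram `Ê₇` over `ℕ`. -/
def adjE7 : Matrix (Fin 8) (Fin 8) ℕ :=
  Matrix.of fun u v => if (u, v) ∈ E7edges ∨ (v, u) ∈ E7edges then 1 else 0


lemma A00 : adjE7 0 0 = 0 := by decide
lemma B00 : (adjE7 * adjE7) 0 0 = 1 := by decide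
lemma A01 : adjE7 0 1 = 1 := by decide
lemma B01 : (adjE7 * adjE7) 0 1 = 0 := by decide
lemma A02 : adjE7 0 2 = 0 := by decide
lemma B02 : (adjE7 * adjE7) 0 2 = 1 := by decide
lemma A03 : adjE7 0 3 = 0 := by decide
lemma B03 : (adjE7 * adjE7) 0 3 = 0 := by decide
lemma A04 : adjE7 0 4 = 0 := by decide
lemma B04 : (adjE7 * adjE7) 0 4 = 0 := by decide
lemma A05 : adjE7 0 5 = 0 := by decide
lemma B05 : (adjE7 * adjE7) 0 5 = 0 := by decide
lemma A06 : adjE7 0 6 = 0 := by decide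
lemma B06 : (adjE7 * adjE7) 0 6 = 0 := by decide
lemma A07 : adjE7 0 7 = 0 := by decide
lemma B07 : (adjE7 * adjE7) 0 7 = 0 := by decide
lemma A10 : adjE7 1 0 = 1 := by decide
lemma B10 : (adjE7 * adjE7) 1 0 = 0 := by decide
lemma A11 : adjE7 1 1 = 0 := by decide
lemma B11 : (adjE7 * adjE7) 1 1 = 2 := by decide
lemma A12 : adjE7 1 2 = 1 := by decide
lemma B12 : (adjE7 * adjE7) 1 2 = 0 := by decide
lemma A13 : adjE7 1 3 = 0 := by decide
lemma B13 : (adjE7 * adjE7) 1 3 = 1 := by decide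
lemma A14 : adjE7 1 4 = 0 := by decide
lemma B14 : (adjE7 * adjE7) 1 4 = 0 := by decide
lemma A15 : adjE7 1 5 = 0 := by decide
lemma B15 : (adjE7 * adjE7) 1 5 = 0 := by decide
lemma A16 : adjE7 1 6 = 0 := by decide
lemma B16 : (adjE7 * adjE7) 1 6 = 0 := by decide
lemma A17 : adjE7 1 7 = 0 := by decide
lemma B17 : (adjE7 * adjE7) 1 7 = 0 := by decide
lemma A20 : adjE7 2 0 = 0 := by decide
lemma B20 : (adjE7 * adjE7) 2 0 = 1 := by decide
lemma A21 : adjE7 2 1 = 1 := by decide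
lemma B21 : (adjE7 * adjE7) 2 1 = 0 := by decide
lemma A22 : adjE7 2 2 = 0 := by decide
lemma B22 : (adjE7 * adjE7) 2 2 = 2 := by decide
lemma A23 : adjE7 2 3 = 1 := by decide
lemma B23 : (adjE7 * adjE7) 2 3 = 0 := by decide
lemma A24 : adjE7 2 4 = 0 := by decide
lemma B24 : (adjE7 * adjE7) 2 4 = 1 := by decide
lemma A25 : adjE7 2 5 = 0 := by decide
lemma B25 : (adjE7 * adjE7) 2 5 = 0 := by decide
lemma A26 : adjE7 2 6 = 0 := by decide
lemma B26 : (adjE7 * adjE7) 2 6 = 0 := by decide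
lemma A27 : adjE7 2 7 = 0 := by decide
lemma B27 : (adjE7 * adjE7) 2 7 = 1 := by decide
lemma A30 : adjE7 3 0 = 0 := by decide
lemma B30 : (adjE7 * adjE7) 3 0 = 0 := by decide
lemma A31 : adjE7 3 1 = 0 := by decide
lemma B31 : (adjE7 * adjE7) 3 1 = 1 := by decide
lemma A32 : adjE7 3 2 = 1 := by decide
lemma B32 : (adjE7 * adjE7) 3 2 = 0 := by decide
lemma A33 : adjE7 3 3 = 0 := by decide
lemma B33 : (adjE7 * adjE7) 3 3 = 3 := by decide
lemma A34 : adjE7 3 4 = 1 := by decide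
lemma B34 : (adjE7 * adjE7) 3 4 = 0 := by decide
lemma A35 : adjE7 3 5 = 0 := by decide
lemma B35 : (adjE7 * adjE7) 3 5 = 1 := by decide
lemma A36 : adjE7 3 6 = 0 := by decide
lemma B36 : (adjE7 * adjE7) 3 6 = 0 := by decide
lemma A37 : adjE7 3 7 = 1 := by decide
lemma B37 : (adjE7 * adjE7) 3 7 = 0 := by decide
lemma A40 : adjE7 4 0 = 0 := by decide
lemma B40 : (adjE7 * adjE7) 4 0 = 0 := by decide
lemma A41 : adjE7 4 1 = 0 := by decide
lemma B41 : (adjE7 * adjE7) 4 1 = 0 := by decide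
lemma A42 : adjE7 4 2 = 0 := by decide
lemma B42 : (adjE7 * adjE7) 4 2 = 1 := by decide
lemma A43 : adjE7 4 3 = 1 := by decide
lemma B43 : (adjE7 * adjE7) 4 3 = 0 := by decide
lemma A44 : adjE7 4 4 = 0 := by decide
lemma B44 : (adjE7 * adjE7) 4 4 = 2 := by decide
lemma A45 : adjE7 4 5 = 1 := by decide
lemma B45 : (adjE7 * adjE7) 4 5 = 0 := by decide
lemma A46 : adjE7 4 6 = 0 := by decide
lemma B46 : (adjE7 * adjE7) 4 6 = 1 := by decide
lemma A47 : adjE7 4 7 = 0 := by decide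
lemma B47 : (adjE7 * adjE7) 4 7 = 1 := by decide
lemma A50 : adjE7 5 0 = 0 := by decide
lemma B50 : (adjE7 * adjE7) 5 0 = 0 := by decide
lemma A51 : adjE7 5 1 = 0 := by decide
lemma B51 : (adjE7 * adjE7) 5 1 = 0 := by decide
lemma A52 : adjE7 5 2 = 0 := by decide
lemma B52 : (adjE7 * adjE7) 5 2 = 0 := by decide
lemma A53 : adjE7 5 3 = 0 := by decide
lemma B53 : (adjE7 * adjE7) 5 3 = 1 := by decide
lemma A54 : adjE7 5 4 = 1 := by decide
lemma B54 : (adjE7 * adjE7) 5 4 = 0 := by decide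
lemma A55 : adjE7 5 5 = 0 := by decide
lemma B55 : (adjE7 * adjE7) 5 5 = 2 := by decide
lemma A56 : adjE7 5 6 = 1 := by decide
lemma B56 : (adjE7 * adjE7) 5 6 = 0 := by decide
lemma A57 : adjE7 5 7 = 0 := by decide
lemma B57 : (adjE7 * adjE7) 5 7 = 0 := by decide
lemma A60 : adjE7 6 0 = 0 := by decide
lemma B60 : (adjE7 * adjE7) 6 0 = 0 := by decide
lemma A61 : adjE7 6 1 = 0 := by decide
lemma B61 : (adjE7 * adjE7) 6 1 = 0 := by decide
lemma A62 : adjE7 6 2 = 0 := by decide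
lemma B62 : (adjE7 * adjE7) 6 2 = 0 := by decide
lemma A63 : adjE7 6 3 = 0 := by decide
lemma B63 : (adjE7 * adjE7) 6 3 = 0 := by decide
lemma A64 : adjE7 6 4 = 0 := by decide
lemma B64 : (adjE7 * adjE7) 6 4 = 1 := by decide
lemma A65 : adjE7 6 5 = 1 := by decide
lemma B65 : (adjE7 * adjE7) 6 5 = 0 := by decide
lemma A66 : adjE7 6 6 = 0 := by decide
lemma B66 : (adjE7 * adjE7) 6 6 = 1 := by decide
lemma A67 : adjE7 6 7 = 0 := by decide
lemma B67 : (adjE7 * adjE7) 6 7 = 0 := by decide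
lemma A70 : adjE7 7 0 = 0 := by decide
lemma B70 : (adjE7 * adjE7) 7 0 = 0 := by decide
lemma A71 : adjE7 7 1 = 0 := by decide
lemma B71 : (adjE7 * adjE7) 7 1 = 0 := by decide
lemma A72 : adjE7 7 2 = 0 := by decide
lemma B72 : (adjE7 * adjE7) 7 2 = 1 := by decide
lemma A73 : adjE7 7 3 = 1 := by decide
lemma B73 : (adjE7 * adjE7) 7 3 = 0 := by decide
lemma A74 : adjE7 7 4 = 0 := by decide
lemma B74 : (adjE7 * adjE7) 7 4 = 1 := by decide
lemma A75 : adjE7 7 5 = 0 := by decide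
lemma B75 : (adjE7 * adjE7) 7 5 = 0 := by decide
lemma A76 : adjE7 7 6 = 0 := by decide
lemma B76 : (adjE7 * adjE7) 7 6 = 0 := by decide
lemma A77 : adjE7 7 7 = 0 := by decide
lemma B77 : (adjE7 * adjE7) 7 7 = 1 := by decide

lemma hexp (n : ℕ) (j : Fin 8) :
    (adjE7 ^ (2 * (n + 1))) 0 j =
      (adjE7 ^ (2 * n)) 0 0 * (adjE7 * adjE7) 0 j +
      (adjE7 ^ (2 * n)) 0 1 * (adjE7 * adjE7) 1 j +
      (adjE7 ^ (2 * n)) 0 2 * (adjE7 * adjE7) 2 j +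
      (adjE7 ^ (2 * n)) 0 3 * (adjE7 * adjE7) 3 j +
      (adjE7 ^ (2 * n)) 0 4 * (adjE7 * adjE7) 4 j +
      (adjE7 ^ (2 * n)) 0 5 * (adjE7 * adjE7) 5 j +
      (adjE7 ^ (2 * n)) 0 6 * (adjE7 * adjE7) 6 j +
      (adjE7 ^ (2 * n)) 0 7 * (adjE7 * adjE7) 7 j := by
  have h : adjE7 ^ (2 * (n + 1)) = adjE7 ^ (2 * n) * (adjE7 * adjE7) := by
    rw [show 2 * (n + 1) = 2 * n + 2 by ring, pow_add, pow_two]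
  rw [h, Matrix.mul_apply, Fin.sum_univ_eight]

lemma hexp1 (n : ℕ) (j : Fin 8) :
    (adjE7 ^ (2 * n + 1)) 0 j =
      (adjE7 ^ (2 * n)) 0 0 * adjE7 0 j +
      (adjE7 ^ (2 * n)) 0 1 * adjE7 1 j +
      (adjE7 ^ (2 * n)) 0 2 * adjE7 2 j +
      (adjE7 ^ (2 * n)) 0 3 * adjE7 3 j +
      (adjE7 ^ (2 * n)) 0 4 * adjE7 4 j +
      (adjE7 ^ (2 * n)) 0 5 * adjE7 5 j +
      (adjE7 ^ (2 * n)) 0 6 * adjE7 6 j +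
      (adjE7 ^ (2 * n)) 0 7 * adjE7 7 j := by
  rw [pow_succ, Matrix.mul_apply, Fin.sum_univ_eight]

lemma even_key : ∀ m : ℕ, 1 ≤ m →
    24 * (adjE7 ^ (2 * m)) 0 0 = 4 ^ m + 6 * 2 ^ m + 8 ∧
    24 * (adjE7 ^ (2 * m)) 0 2 = 3 * 4 ^ m + 6 * 2 ^ m ∧
    24 * (adjE7 ^ (2 * m)) 0 7 + 8 = 2 * 4 ^ m ∧
    24 * (adjE7 ^ (2 * m)) 0 4 + 6 * 2 ^ m = 3 * 4 ^ m ∧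
    24 * (adjE7 ^ (2 * m)) 0 6 + 6 * 2 ^ m = 4 ^ m + 8 := by
  intro m hm
  induction m with
  | zero => omega
  | succ n ih =>
    rcases Nat.lt_or_ge n 1 with h1 | h1
    · interval_cases n
      have h : adjE7 ^ (2 * 1) = adjE7 * adjE7 := by rw [show 2 * 1 = 2 from rfl, pow_two]
      rw [h]
      refine ⟨?_, ?_, ?_, ?_, ?_⟩ <;> decide
    · obtain ⟨e0, e2, e7, e4, e6⟩ := ih h1
      have h4 : (4:ℕ) ^ (n + 1) = 4 * 4 ^ n := by rw [pow_succ]; ring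
      have h2 : (2:ℕ) ^ (n + 1) = 2 * 2 ^ n := by rw [pow_succ]; ring
      refine ⟨?_, ?_, ?_, ?_, ?_⟩ <;>
        · rw [hexp]
          simp only [B00, B01, B02, B03, B04, B05, B06, B07, B10, B11, B12, B13, B14, B15, B16, B17, B20, B21, B22, B23, B24, B25, B26, B27, B30, B31, B32, B33, B34, B35, B36, B37, B40, B41, B42, B43, B44, B45, B46, B47, B50, B51, B52, B53, B54, B55, B56, B57, B60, B61, B62, B63, B64, B65, B66, B67, B70, B71, B72, B73, B74, B75, B76, B77]
          omega

lemma odd_key : ∀ m : ℕ,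
    24 * (adjE7 ^ (2 * m + 1)) 0 1 = 4 ^ (m + 1) + 6 * 2 ^ (m + 1) + 8 ∧
    24 * (adjE7 ^ (2 * m + 1)) 0 3 + 8 = 2 * 4 ^ (m + 1) ∧
    24 * (adjE7 ^ (2 * m + 1)) 0 5 + 6 * 2 ^ (m + 1) = 4 ^ (m + 1) + 8 := by
  intro m
  rcases Nat.eq_zero_or_pos m with rfl | hm
  · have h : adjE7 ^ (2 * 0 + 1) = adjE7 := by rw [show 2 * 0 + 1 = 1 from rfl, pow_one]
    rw [h]
    refine ⟨?_, ?_, ?_⟩ <;> decide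
  · obtain ⟨e0, e2, e7, e4, e6⟩ := even_key m hm
    have h4 : (4:ℕ) ^ (m + 1) = 4 * 4 ^ m := by rw [pow_succ]; ring
    have h2 : (2:ℕ) ^ (m + 1) = 2 * 2 ^ m := by rw [pow_succ]; ring
    refine ⟨?_, ?_, ?_⟩ <;>
      · rw [hexp1]
        simp only [A00, A01, A02, A03, A04, A05, A06, A07, A10, A11, A12, A13, A14, A15, A16, A17, A20, A21, A22, A23, A24, A25, A26, A27, A30, A31, A32, A33, A34, A35, A36, A37, A40, A41, A42, A43, A44, A45, A46, A47, A50, A51, A52, A53, A54, A55, A56, A57, A60, A61, A62, A63, A64, A65, A66, A67, A70, A71, A72, A73, A74, A75, A76, A77]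
        omega

/-- Walk counts on `Ê₇` from the affine node `0`. By Schur–Weyl duality these are the
dimensions of the irreducible modules of the centralizer algebra `Z_k(O)` for the
binary octahedral group `O`, and `dim Z_k(O) = (4^k + 6·2^k + 8)/24`. -/
theorem stmt14 :
    (∀ m : ℕ, 1 ≤ m →
      24 * (adjE7 ^ (2 * m)) 0 0 = 4 ^ m + 6 * 2 ^ m + 8 ∧
      24 * (adjE7 ^ (2 * m)) 0 2 = 3 * 4 ^ m + 6 * 2 ^ m ∧
      24 * (adjE7 ^ (2 * m)) 0 7 + 8 = 2 * 4 ^ m ∧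
      24 * (adjE7 ^ (2 * m)) 0 4 + 6 * 2 ^ m = 3 * 4 ^ m ∧
      24 * (adjE7 ^ (2 * m)) 0 6 + 6 * 2 ^ m = 4 ^ m + 8) ∧
    (∀ m : ℕ,
      24 * (adjE7 ^ (2 * m + 1)) 0 1 = 4 ^ (m + 1) + 6 * 2 ^ (m + 1) + 8 ∧
      24 * (adjE7 ^ (2 * m + 1)) 0 3 + 8 = 2 * 4 ^ (m + 1) ∧
      24 * (adjE7 ^ (2 * m + 1)) 0 5 + 6 * 2 ^ (m + 1) = 4 ^ (m + 1) + 8) ∧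
    (∀ k : ℕ, 1 ≤ k → (adjE7 ^ (2 * k)) 0 0 = (4 ^ k + 6 * 2 ^ k + 8) / 24) := by
  refine ⟨even_key, odd_key, fun k hk => ?_⟩
  have := (even_key k hk).1
  omega
end

section
/- Let A : Matrix (Fin 9) (Fin 9) ℕ be the adjacency matrix of the affine Dynkin diagram Ê₈ described in the context, and let L : ℕ → ℕ be the Lucas sequence (L 0 = 2, L 1 = 1, L (n+2) = L (n+1) + L n). Then for every m ≥ 1: 60·(A^(2m)) 0 0 = 4^m + 12·L (2m) + 20, 60·(A^(2m)) 0 2 = 3·4^m + 12·L (2m+1), 60·(A^(2m)) 0 4 + 20 = 5·4^m, and 60·(A^(2m)) 0 6 + 12·L (2m) = 4·4^m + 20; and for every m ≥ 0: 60·(A^(2m+1)) 0 1 = 4^(m+1) + 12·L (2m+2) + 20, 60·(A^(2m+1)) 0 3 + 20 = 2·4^(m+1) + 12·L (2m+1), 60·(A^(2m+1)) 0 5 + 12·L (2m+1) = 3·4^(m+1), and 60·(A^(2m+1)) 0 7 + 12·L (2m) = 4^(m+1) + 20. In particular, the number of closed walks of length 2k at node 0 equals (4^k + 12·L(2k) +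 20)/60 for all k ≥ 1. -/
/-- The Lucas numbers: `L 0 = 2`, `L 1 = 1`, `L (n+2) = L (n+1) + L n`. -/
def lucas : ℕ → ℕ
  | 0 => 2
  | 1 => 1
  | (n + 2) => lucas (n + 1) + lucas n

/-- Edge list of the affine Dynkin diagram `Ê₈`, with vertices `0,…,8` standing for
the nodes `0, 1, 2, 3, 4, 5, 6⁺, 7, 6⁻`. -/
def E8edges : List (Fin 9 × Fin 9) :=
  [(0,1), (1,2), (2,3), (3,4), (4,5), (5,6), (6,7), (5,8)]

/-- Adjacency matrix of the affine Dynkin diagram `Ê₈` over `ℕ`. -/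
def adjE8 : Matrix (Fin 9) (Fin 9) ℕ :=
  Matrix.of fun u v => if (u, v) ∈ E8edges ∨ (v, u) ∈ E8edges then 1 else 0

private lemma sum_univ_nine {M : Type*} [AddCommMonoid M] (f : Fin 9 → M) :
    ∑ i, f i = f 0 + f 1 + f 2 + f 3 + f 4 + f 5 + f 6 + f 7 + f 8 := by
  rw [Fin.sum_univ_castSucc, Fin.sum_univ_eight]; rfl

private lemma fsucc2 : (Fin.succ 2 : Fin 9) = 3 := rfl
private lemma fsucc3 : ((3 : Fin 9).succ) = 4 := rfl
private lemma fsucc4 : ((4 : Fin 9).succ) = 5 := rfl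
private lemma fsucc5 : ((5 : Fin 9).succ) = 6 := rfl
private lemma fsucc6 : ((6 : Fin 9).succ) = 7 := rfl
private lemma fsucc7 : ((7 : Fin 9).succ) = 8 := rfl

private lemma step0 (n : ℕ) : (adjE8 ^ (n+1)) 0 0 = (adjE8 ^ n) 0 1 := by
  rw [pow_succ, Matrix.mul_apply, sum_univ_nine]; simp +decide [adjE8, E8edges]
private lemma step1 (n : ℕ) : (adjE8 ^ (n+1)) 0 1 = (adjE8 ^ n) 0 0 + (adjE8 ^ n) 0 2 := by
  rw [pow_succ, Matrix.mul_apply, sum_univ_nine]; simp +decide [adjE8, E8edges]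
private lemma step2 (n : ℕ) : (adjE8 ^ (n+1)) 0 2 = (adjE8 ^ n) 0 1 + (adjE8 ^ n) 0 3 := by
  rw [pow_succ, Matrix.mul_apply, sum_univ_nine]; simp +decide [adjE8, E8edges]
private lemma step3 (n : ℕ) : (adjE8 ^ (n+1)) 0 3 = (adjE8 ^ n) 0 2 + (adjE8 ^ n) 0 4 := by
  rw [pow_succ, Matrix.mul_apply, sum_univ_nine]; simp +decide [adjE8, E8edges]
private lemma step4 (n : ℕ) : (adjE8 ^ (n+1)) 0 4 = (adjE8 ^ n) 0 3 + (adjE8 ^ n) 0 5 := by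
  rw [pow_succ, Matrix.mul_apply, sum_univ_nine]; simp +decide [adjE8, E8edges]
private lemma step5 (n : ℕ) : (adjE8 ^ (n+1)) 0 5 = (adjE8 ^ n) 0 4 + (adjE8 ^ n) 0 6 + (adjE8 ^ n) 0 8 := by
  rw [pow_succ, Matrix.mul_apply, sum_univ_nine]; simp +decide [adjE8, E8edges]
private lemma step6 (n : ℕ) : (adjE8 ^ (n+1)) 0 6 = (adjE8 ^ n) 0 5 + (adjE8 ^ n) 0 7 := by
  rw [pow_succ, Matrix.mul_apply, sum_univ_nine]; simp +decide [adjE8, E8edges]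
private lemma step7 (n : ℕ) : (adjE8 ^ (n+1)) 0 7 = (adjE8 ^ n) 0 6 := by
  rw [pow_succ, Matrix.mul_apply, sum_univ_nine]; simp +decide [adjE8, E8edges]
private lemma step8 (n : ℕ) : (adjE8 ^ (n+1)) 0 8 = (adjE8 ^ n) 0 5 := by
  rw [pow_succ, Matrix.mul_apply, sum_univ_nine]; simp +decide [adjE8, E8edges]

/-- Odd-step formulas (length `2m+1`). -/
private def Od (m : ℕ) : Prop :=
  60 * (adjE8 ^ (2 * m + 1)) 0 1 = 4 ^ (m + 1) + 12 * lucas (2 * m + 2) + 20 ∧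
  60 * (adjE8 ^ (2 * m + 1)) 0 3 + 20 = 2 * 4 ^ (m + 1) + 12 * lucas (2 * m + 1) ∧
  60 * (adjE8 ^ (2 * m + 1)) 0 5 + 12 * lucas (2 * m + 1) = 3 * 4 ^ (m + 1) ∧
  60 * (adjE8 ^ (2 * m + 1)) 0 7 + 12 * lucas (2 * m) = 4 ^ (m + 1) + 20

/-- Even-step formulas (length `2m+2`). -/
private def Ev (m : ℕ) : Prop :=
  60 * (adjE8 ^ (2 * m + 2)) 0 0 = 4 ^ (m + 1) + 12 * lucas (2 * m + 2) + 20 ∧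
  60 * (adjE8 ^ (2 * m + 2)) 0 2 = 3 * 4 ^ (m + 1) + 12 * lucas (2 * m + 3) ∧
  60 * (adjE8 ^ (2 * m + 2)) 0 4 + 20 = 5 * 4 ^ (m + 1) ∧
  60 * (adjE8 ^ (2 * m + 2)) 0 6 + 12 * lucas (2 * m + 2) = 4 * 4 ^ (m + 1) + 20 ∧
  60 * (adjE8 ^ (2 * m + 2)) 0 8 + 12 * lucas (2 * m + 1) = 3 * 4 ^ (m + 1)

private lemma lucas_rec (n : ℕ) : lucas (n + 2) = lucas (n + 1) + lucas n := rfl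

private lemma od_one : Od 0 := by
  have h : (adjE8 ^ (2 * 0 + 1)) = adjE8 := by norm_num
  refine ⟨?_, ?_, ?_, ?_⟩ <;> rw [h] <;> simp [adjE8, E8edges, lucas]

private lemma ev_of_od (m : ℕ) (h : Od m) : Ev m := by
  obtain ⟨h1, h3, h5, h7⟩ := h
  have l1 := lucas_rec (2 * m)
  have l2 := lucas_rec (2 * m + 1)
  have hs : 2 * m + 2 = (2 * m + 1) + 1 := rfl
  refine ⟨?_, ?_, ?_, ?_, ?_⟩
  · rw [hs, step0]; exact h1
  · rw [hs, step2]; linarith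
  · rw [hs, step4]; linarith
  · rw [hs, step6]; linarith
  · rw [hs, step8]; linarith

private lemma od_of_ev (m : ℕ) (h : Ev m) : Od (m + 1) := by
  obtain ⟨h0, h2, h4, h6, h8⟩ := h
  have l1 := lucas_rec (2 * m + 1)
  have l2 := lucas_rec (2 * m + 2)
  have hp : (4:ℕ) ^ (m + 1 + 1) = 4 * 4 ^ (m + 1) := by ring
  have hs : 2 * (m + 1) + 1 = (2 * m + 2) + 1 := by ring
  have hn : 2 * (m + 1) = 2 * m + 2 := by ring
  simp only [show 2 * m + 1 + 2 = 2 * m + 3 from rfl, show 2 * m + 1 + 1 = 2 * m + 2 from rfl,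
    show 2 * m + 2 + 2 = 2 * m + 4 from rfl, show 2 * m + 2 + 1 = 2 * m + 3 from rfl] at l1 l2
  refine ⟨?_, ?_, ?_, ?_⟩
  · rw [hs, step1, hn, hp]
    simp only [show 2 * m + 2 + 2 = 2 * m + 4 from rfl]
    linarith
  · rw [hs, step3, hp]
    simp only [show 2 * m + 2 + 1 = 2 * m + 3 from rfl]
    linarith
  · rw [hs, step5, hp]
    simp only [show 2 * m + 2 + 1 = 2 * m + 3 from rfl]
    linarith
  · rw [hs, step7, hn, hp]; linarith

private lemma key (m : ℕ) : Od m ∧ Ev m := by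
  induction m with
  | zero => exact ⟨od_one, ev_of_od 0 od_one⟩
  | succ n ih =>
    have ho := od_of_ev n ih.2
    exact ⟨ho, ev_of_od (n + 1) ho⟩

/-- Walk counts on `Ê₈` from the affine node `0`, in terms of the Lucas numbers.
By Schur–Weyl duality these are the dimensions of the irreducible modules of the
centralizer algebra `Z_k(I)` for the binary icosahedral group `I`, and
`dim Z_k(I) = (4^k + 12·L(2k) + 20)/60`. -/
theorem stmt15 :
    (∀ m : ℕ, 1 ≤ m →
      60 * (adjE8 ^ (2 * m)) 0 0 = 4 ^ m + 12 * lucas (2 * m) + 20 ∧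
      60 * (adjE8 ^ (2 * m)) 0 2 = 3 * 4 ^ m + 12 * lucas (2 * m + 1) ∧
      60 * (adjE8 ^ (2 * m)) 0 4 + 20 = 5 * 4 ^ m ∧
      60 * (adjE8 ^ (2 * m)) 0 6 + 12 * lucas (2 * m) = 4 * 4 ^ m + 20) ∧
    (∀ m : ℕ,
      60 * (adjE8 ^ (2 * m + 1)) 0 1 = 4 ^ (m + 1) + 12 * lucas (2 * m + 2) + 20 ∧
      60 * (adjE8 ^ (2 * m + 1)) 0 3 + 20 = 2 * 4 ^ (m + 1) + 12 * lucas (2 * m + 1) ∧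
      60 * (adjE8 ^ (2 * m + 1)) 0 5 + 12 * lucas (2 * m + 1) = 3 * 4 ^ (m + 1) ∧
      60 * (adjE8 ^ (2 * m + 1)) 0 7 + 12 * lucas (2 * m) = 4 ^ (m + 1) + 20) ∧
    (∀ k : ℕ, 1 ≤ k →
      (adjE8 ^ (2 * k)) 0 0 = (4 ^ k + 12 * lucas (2 * k) + 20) / 60) := by

  have even : ∀ m : ℕ, 1 ≤ m →
      60 * (adjE8 ^ (2 * m)) 0 0 = 4 ^ m + 12 * lucas (2 * m) + 20 ∧
      60 * (adjE8 ^ (2 * m)) 0 2 = 3 * 4 ^ m + 12 * lucas (2 * m + 1) ∧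
      60 * (adjE8 ^ (2 * m)) 0 4 + 20 = 5 * 4 ^ m ∧
      60 * (adjE8 ^ (2 * m)) 0 6 + 12 * lucas (2 * m) = 4 * 4 ^ m + 20 := by
    rintro (_ | m) hm
    · omega
    · obtain ⟨h0, h2, h4, h6, h8⟩ := (key m).2
      refine ⟨?_, ?_, ?_, ?_⟩ <;>
        simp only [show 2 * (m + 1) = 2 * m + 2 from by ring,
          show 2 * m + 2 + 1 = 2 * m + 3 from rfl] <;> omega
  refine ⟨even, fun m => (key m).1, fun k hk => ?_⟩
  have h := (even k hk).1
  omega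
end

section
/- Let J be a finite type with decidable equality and B = Bool. For every matrix a : Matrix (J × B) (J × B) ℂ, the product Ek * emb(a) * Ek equals the matrix M : Matrix (J × B × B) (J × B × B) ℂ with entries M (p,s,t) (q,u,v) = 2 · ε(a) p q · ℰ (s,t) (u,v). (In tensor notation: e_k · a · e_k = 2 ε_k(a) ⊗ e, where ε_k is the conditional expectation.) -/
open Matrix

/-- The matrix `ℰ` of the map `e : V ⊗ V → V ⊗ V`, `e(x ⊗ y) = x ⊗ y − y ⊗ x`,
in the basis of `V ⊗ V` indexed by `Bool × Bool`. -/
noncomputable def Emat : Matrix (Bool × Bool) (Bool × Bool) ℂ :=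
  Matrix.of fun p q => (if p = q then 1 else 0) - (if p = (q.2, q.1) then 1 else 0)

/-- The matrix of `e_k = 1^{⊗(k−1)} ⊗ e` on `V^{⊗(k+1)}`, with `J` indexing a basis of
`V^{⊗(k−1)}`. -/
noncomputable def EkMat (J : Type*) [DecidableEq J] :
    Matrix (J × Bool × Bool) (J × Bool × Bool) ℂ :=
  Matrix.of fun x y => (if x.1 = y.1 then 1 else 0) * Emat x.2 y.2

/-- The embedding `a ↦ a ⊗ 1` of `End(V^{⊗k})` into `End(V^{⊗(k+1)})`. -/
noncomputable def emb {J : Type*} (a : Matrix (J × Bool) (J × Bool) ℂ) :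
    Matrix (J × Bool × Bool) (J × Bool × Bool) ℂ :=
  Matrix.of fun x y =>
    a (x.1, x.2.1) (y.1, y.2.1) * (if x.2.2 = y.2.2 then 1 else 0)

/-- The conditional expectation `ε_k : End(V^{⊗k}) → End(V^{⊗(k−1)})`. -/
noncomputable def condExp {J : Type*} [Fintype J]
    (a : Matrix (J × Bool) (J × Bool) ℂ) : Matrix J J ℂ :=
  Matrix.of fun p q => (1 / 2) * ∑ t : Bool, a (p, t) (q, t)

/-- `e_k · a · e_k = 2 ε_k(a) ⊗ e` for every `a ∈ End(V^{⊗k})`. -/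
theorem stmt16 (J : Type*) [Fintype J] [DecidableEq J]
    (a : Matrix (J × Bool) (J × Bool) ℂ) :
    EkMat J * emb a * EkMat J =
      Matrix.of fun x y => 2 * condExp a x.1 y.1 * Emat x.2 y.2 := by
  ext ⟨p, s, t⟩ ⟨q, u, v⟩
  fin_cases s <;> fin_cases t <;> fin_cases u <;> fin_cases v <;>
    simp [mul_apply, EkMat, emb, condExp, Emat, Fintype.sum_prod_type, Fintype.sum_bool,
      Finset.mul_sum, Finset.sum_mul, mul_ite, ite_mul, Finset.sum_ite_eq, Finset.sum_ite_eq'] <;>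
    ring
end

section
/- Let J be a finite type with decidable equality and B = Bool. Let N : Matrix J J ℂ, let M : Matrix B B ℂ be invertible, and write N ⊗ M : Matrix (J × B) (J × B) ℂ for the Kronecker product, (N ⊗ M) (p,t) (q,u) = N p q · M t u. If a : Matrix (J × B) (J × B) ℂ satisfies a * (N ⊗ M) = (N ⊗ M) * a, then ε(a) * N = N * ε(a). (In particular, taking N = g^{⊗(k−1)} and M = g for g ranging over a subgroup G of SU₂, the conditional expectation ε_k maps the centralizer algebra Z_k(G) into Z_{k−1}(G).) -/
open Matrix

/-- The Kronecker product `N ⊗ M` of a `J × J` matrix with a `Bool × Bool` matrix,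
the matrix of `N ⊗ M` on `V^{⊗(k−1)} ⊗ V`. -/
noncomputable def kron {J : Type*} (N : Matrix J J ℂ) (M : Matrix Bool Bool ℂ) :
    Matrix (J × Bool) (J × Bool) ℂ :=
  Matrix.of fun p q => N p.1 q.1 * M p.2 q.2

lemma kron_mul {J : Type*} [Fintype J] (N N' : Matrix J J ℂ) (M M' : Matrix Bool Bool ℂ) :
    kron N M * kron N' M' = kron (N * N') (M * M') := by
  ext ⟨p,t⟩ ⟨q,u⟩
  simp only [kron, of_apply, mul_apply, Fintype.sum_prod_type]
  rw [Finset.sum_mul_sum]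
  apply Finset.sum_congr rfl; intros; apply Finset.sum_congr rfl; intros; ring

lemma kron_one_one {J : Type*} [Fintype J] [DecidableEq J] :
    (kron (1 : Matrix J J ℂ) (1 : Matrix Bool Bool ℂ)) = 1 := by
  ext ⟨p,t⟩ ⟨q,u⟩
  simp [kron, one_apply, Prod.ext_iff, ite_and]
  split <;> simp_all

lemma condExp_mul_kronN {J : Type*} [Fintype J] [DecidableEq J]
    (b : Matrix (J × Bool) (J × Bool) ℂ) (N : Matrix J J ℂ) :
    condExp (b * kron N 1) = condExp b * N := by
  ext p q
  simp only [condExp, of_apply, mul_apply, kron, Fintype.sum_prod_type, one_apply,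
    mul_ite, mul_one, mul_zero, Finset.sum_ite_eq', Finset.mem_univ, if_true,
    Finset.mul_sum, Finset.sum_mul]
  rw [Finset.sum_comm]
  apply Finset.sum_congr rfl; intros; apply Finset.sum_congr rfl; intros; ring

lemma condExp_kronN_mul {J : Type*} [Fintype J] [DecidableEq J]
    (b : Matrix (J × Bool) (J × Bool) ℂ) (N : Matrix J J ℂ) :
    condExp (kron N 1 * b) = N * condExp b := by
  ext p q
  simp only [condExp, of_apply, mul_apply, kron, Fintype.sum_prod_type, one_apply,
    ite_mul, one_mul, zero_mul, mul_ite, mul_zero, Finset.sum_ite_eq, Finset.mem_univ,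
    if_true, Finset.mul_sum, Finset.sum_mul]
  rw [Finset.sum_comm]
  apply Finset.sum_congr rfl; intros; apply Finset.sum_congr rfl; intros; ring

lemma condExp_conj {J : Type*} [Fintype J] [DecidableEq J]
    (b : Matrix (J × Bool) (J × Bool) ℂ) (M M' : Matrix Bool Bool ℂ) (hM : M' * M = 1) :
    condExp (kron 1 M * b * kron 1 M') = condExp b := by
  have e : ∀ v u : Bool, M' v true * M true u + M' v false * M false u
      = if v = u then 1 else 0 := by
    intro v u
    have := congrFun (congrFun hM v) u
    simpa [mul_apply, Fintype.sum_bool, one_apply] using this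
  have e00 := e false false; have e01 := e false true
  have e10 := e true false; have e11 := e true true
  norm_num at e00 e01 e10 e11
  ext p q
  simp only [condExp, of_apply, mul_apply, kron, Fintype.sum_prod_type, one_apply,
    ite_mul, one_mul, zero_mul, mul_ite, mul_zero, Finset.sum_ite_eq, Finset.sum_ite_eq',
    Finset.mem_univ, if_true, Fintype.sum_bool, Finset.mul_sum, Finset.sum_add_distrib,
    add_mul, mul_add, ite_mul, zero_mul]
  linear_combination (1/2 : ℂ) * b (p,false) (q,false) * e00
    + (1/2:ℂ) * b (p,true) (q,false) * e01
    + (1/2:ℂ) * b (p,false) (q,true) * e10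
    + (1/2:ℂ) * b (p,true) (q,true) * e11

/-- If `a` commutes with `N ⊗ M` for `M` invertible, then `ε(a)` commutes with `N`.
In particular the conditional expectation maps `Z_k(G)` into `Z_{k−1}(G)`. -/
theorem stmt17 (J : Type*) [Fintype J] [DecidableEq J]
    (N : Matrix J J ℂ) (M : Matrix Bool Bool ℂ) (hM : IsUnit M)
    (a : Matrix (J × Bool) (J × Bool) ℂ)
    (h : a * kron N M = kron N M * a) :
    condExp a * N = N * condExp a := by
  have hd : IsUnit M.det := (Matrix.isUnit_iff_isUnit_det M).mp hM
  have hMM : M * M⁻¹ = 1 := Matrix.mul_nonsing_inv M hd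
  have hMM' : M⁻¹ * M = 1 := Matrix.nonsing_inv_mul M hd
  have key : a * kron N 1 = kron 1 M * (kron N 1 * a) * kron 1 M⁻¹ := by
    have h1 : kron N M = kron N 1 * kron 1 M := by rw [kron_mul]; simp
    have h2 : kron N M = kron 1 M * kron N 1 := by rw [kron_mul]; simp
    have hK : kron (1 : Matrix J J ℂ) M * kron 1 M⁻¹ = 1 := by
      rw [kron_mul, hMM, Matrix.one_mul, kron_one_one]
    calc a * kron N 1 = a * kron N 1 * (kron 1 M * kron 1 M⁻¹) := by rw [hK, Matrix.mul_one]
      _ = (a * kron N M) * kron 1 M⁻¹ := by rw [h1]; rw [Matrix.mul_assoc, Matrix.mul_assoc, Matrix.mul_assoc]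
      _ = (kron N M * a) * kron 1 M⁻¹ := by rw [h]
      _ = kron 1 M * (kron N 1 * a) * kron 1 M⁻¹ := by rw [h2]; simp only [Matrix.mul_assoc]
  have := congrArg condExp key
  rwa [condExp_mul_kronN, condExp_conj _ _ _ hMM', condExp_kronN_mul] at this
end
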